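/- Fix λ₀ > 0 and a > 0. For all sufficiently large L > 0 and every Poisson random variable K with parameter λ ≥ λ₀, one has P(|K − λ| > a·√λ·ln L) ≤ L^{−d·ln ln L}, where d = a·√λ₀/2. -/

import Mathlib

open MeasureTheory Real Filter Asymptotics

/-! The upper tail of a Poisson variable is controlled by Bennett's function, the lower tail by a
Gaussian term; both come from the exponential Chernoff bound. With `t = a √λ ℓ`, `ℓ = ln L` and
`q = t / λ = a ℓ / √λ`, the Gaussian regime `q ≤ e² √ℓ` gives an exponent of order `ℓ^(3/2)`,
while for `q ≥ e² √ℓ` Bennett's function grows like `q ln q`, which yields the exponent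
`t (1 + ln ℓ / 2) ≥ a √λ₀ ℓ + d ℓ ln ℓ`. Both beat `d ℓ ln ℓ + ln 2` for large `ℓ`. -/

noncomputable def bennett (q : ℝ) : ℝ := (1 + q) * log (1 + q) - q

lemma sq_div_two_add_le_bennett {q : ℝ} (hq : 0 ≤ q) : q ^ 2 / (2 + q) ≤ bennett q := by
  have hlog := mul_le_mul_of_nonneg_left (le_log_one_add_of_nonneg hq)
    (by linarith : (0 : ℝ) ≤ 1 + q)
  have hq2 : q ^ 2 / (2 + q) = (1 + q) * (2 * q / (q + 2)) - q := by
    field_simp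
    ring
  rw [bennett, hq2]
  linarith

lemma mul_log_one_add_sub_one_le_bennett {q : ℝ} (hq : 0 ≤ q) :
    q * (log (1 + q) - 1) ≤ bennett q := by
  have := log_nonneg (by linarith : (1 : ℝ) ≤ 1 + q)
  rw [bennett]
  nlinarith

lemma exp_neg_le_one_sub_add_sq_div_two {x : ℝ} (hx : 0 ≤ x) :
    exp (-x) ≤ 1 - x + x ^ 2 / 2 := by
  have hexp := quadratic_le_exp_of_nonneg hx
  have hpos : 0 < 1 - x + x ^ 2 / 2 := by nlinarith [sq_nonneg (x - 1)]
  -- `(1 - x + x²/2) (1 + x + x²/2) = 1 + x⁴/4`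
  rw [exp_neg, inv_le_iff_one_le_mul₀ (exp_pos x)]
  nlinarith [mul_le_mul_of_nonneg_left hexp hpos.le, pow_nonneg hx 4]

lemma hasSum_poisson_mul_exp (lam s c : ℝ) :
    HasSum (fun n : ℕ => exp (-lam) * lam ^ n / n.factorial * exp (s * n - c))
      (exp (lam * (exp s - 1) - c)) := by
  have hterm : ∀ n : ℕ, exp (-lam) * lam ^ n / n.factorial * exp (s * n - c)
      = exp (-lam - c) * ((lam * exp s) ^ n / n.factorial) := fun n => by
    rw [mul_pow, ← exp_nat_mul, sub_eq_add_neg, exp_add, sub_eq_add_neg, exp_add, mul_comm s]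
    ring
  have hvalue : exp (lam * (exp s - 1) - c) = exp (-lam - c) * exp (lam * exp s) := by
    rw [← exp_add]
    ring_nf
  have h := (NormedSpace.expSeries_div_hasSum_exp (lam * exp s)).mul_left (exp (-lam - c))
  rw [← exp_eq_exp_ℝ] at h
  rwa [funext hterm, hvalue]

section PoissonTail

variable {Ω : Type*} [MeasurableSpace Ω]

def HasPoissonPMF (μ : Measure Ω) (K : Ω → ℕ) (lam : ℝ) : Prop :=
  ∀ n : ℕ, μ {ω | K ω = n} = ENNReal.ofReal (exp (-lam) * lam ^ n / n.factorial)

variable {μ : Measure Ω} {K : Ω → ℕ} {lam : ℝ}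

lemma measure_le_mul_le_exp (hlam : 0 ≤ lam) (hK : HasPoissonPMF μ K lam)
    (s c : ℝ) :
    μ {ω | c ≤ s * K ω} ≤ ENNReal.ofReal (exp (lam * (exp s - 1) - c)) := by
  have hsum := hasSum_poisson_mul_exp lam s c
  have hnonneg : ∀ n : ℕ, 0 ≤ exp (-lam) * lam ^ n / n.factorial * exp (s * n - c) :=
    fun n => by positivity
  calc μ {ω | c ≤ s * K ω} ≤ ∑' n : ℕ, μ {ω | K ω = n ∧ c ≤ s * n} :=
        (measure_mono (t := ⋃ n : ℕ, {ω | K ω = n ∧ c ≤ s * n})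
          fun ω hω => Set.mem_iUnion.2 ⟨K ω, rfl, hω⟩).trans (measure_iUnion_le _)
    _ ≤ ∑' n : ℕ, ENNReal.ofReal (exp (-lam) * lam ^ n / n.factorial * exp (s * n - c)) := by
        refine ENNReal.tsum_le_tsum fun n => ?_
        by_cases hn : c ≤ s * n
        · refine (measure_mono (t := {ω | K ω = n}) fun ω hω => hω.1).trans ?_
          rw [hK n]
          exact ENNReal.ofReal_le_ofReal
            (le_mul_of_one_le_right (by positivity) (one_le_exp (sub_nonneg.2 hn)))
        · simp [hn]
    _ = ENNReal.ofReal (exp (lam * (exp s - 1) - c)) := by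
        rw [← ENNReal.ofReal_tsum_of_nonneg hnonneg hsum.summable, hsum.tsum_eq]

lemma measure_add_lt_le_exp_bennett (hlam : 0 < lam) (hK : HasPoissonPMF μ K lam)
    {t : ℝ} (ht : 0 ≤ t) :
    μ {ω | lam + t < K ω} ≤ ENNReal.ofReal (exp (-(lam * bennett (t / lam)))) := by
  have hq : 0 ≤ t / lam := by positivity
  set s := log (1 + t / lam)
  have hs : 0 ≤ s := log_nonneg (by linarith)
  have hexp : lam * (exp s - 1) - s * (lam + t) = -(lam * bennett (t / lam)) := by
    have hlamq : lam * (t / lam) = t := mul_div_cancel₀ t hlam.ne'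
    rw [exp_log (by positivity), bennett]
    linear_combination s * hlamq
  rw [← hexp]
  exact (measure_mono fun ω (hω : lam + t < K ω) =>
    mul_le_mul_of_nonneg_left hω.le hs).trans (measure_le_mul_le_exp hlam.le hK s _)

lemma measure_lt_sub_le_exp (hlam : 0 < lam) (hK : HasPoissonPMF μ K lam)
    {t : ℝ} (ht : 0 ≤ t) :
    μ {ω | K ω < lam - t} ≤ ENNReal.ofReal (exp (-(t ^ 2 / (2 * lam)))) := by
  have hq : 0 ≤ t / lam := by positivity
  have hexp : lam * (exp (-(t / lam)) - 1) - -(t / lam) * (lam - t) ≤ -(t ^ 2 / (2 * lam)) := by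
    have h := mul_le_mul_of_nonneg_left (exp_neg_le_one_sub_add_sq_div_two hq) hlam.le
    have hid : lam * (1 - t / lam + (t / lam) ^ 2 / 2 - 1) - -(t / lam) * (lam - t)
        = -(t ^ 2 / (2 * lam)) := by
      field_simp
      ring
    linarith
  refine (measure_mono fun ω (hω : K ω < lam - t) => ?_).trans
    ((measure_le_mul_le_exp hlam.le hK (-(t / lam)) _).trans
      (ENNReal.ofReal_le_ofReal (exp_le_exp.2 hexp)))
  exact mul_le_mul_of_nonpos_left hω.le (neg_nonpos.2 hq)

lemma measure_lt_abs_sub_le (hlam : 0 < lam) (hK : HasPoissonPMF μ K lam)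
    {t : ℝ} (ht : 0 ≤ t) :
    μ {ω | t < |(K ω : ℝ) - lam|} ≤ ENNReal.ofReal (exp (-(lam * bennett (t / lam))))
      + ENNReal.ofReal (exp (-(t ^ 2 / (2 * lam)))) := by
  refine (measure_mono fun ω (hω : t < |(K ω : ℝ) - lam|) => ?_).trans
    ((measure_union_le _ _).trans
      (add_le_add (measure_add_lt_le_exp_bennett hlam hK ht) (measure_lt_sub_le_exp hlam hK ht)))
  rcases lt_abs.1 hω with h | h
  · exact Or.inl (show lam + t < K ω by linarith)
  · exact Or.inr (show K ω < lam - t by linarith)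

end PoissonTail

lemma eventually_log_two_add_mul_log_le (b : ℝ) {c : ℝ} (hc : 0 < c) :
    ∀ᶠ ℓ in atTop, log 2 + b * ℓ * log ℓ ≤ c * (ℓ * √ℓ) := by
  have hsqrt : (fun ℓ : ℝ => ℓ * √ℓ) = fun ℓ => id ℓ * ℓ ^ (1 / 2 : ℝ) := by
    ext ℓ
    rw [sqrt_eq_rpow, id]
  have hlog : (fun ℓ : ℝ => ℓ * log ℓ) =o[atTop] fun ℓ => ℓ * √ℓ := by
    rw [hsqrt]
    exact (isBigO_refl id atTop).mul_isLittleO (isLittleO_log_rpow_atTop one_half_pos)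
  have hconst : (fun _ : ℝ => log 2) =o[atTop] fun ℓ => ℓ * √ℓ :=
    isLittleO_const_left.2 <| Or.inr <|
      tendsto_norm_atTop_atTop.comp (tendsto_id.atTop_mul_atTop₀ tendsto_sqrt_atTop)
  filter_upwards [(hconst.add (hlog.const_mul_left b)).bound hc, eventually_ge_atTop 0]
    with ℓ h hℓ
  rw [norm_of_nonneg (by positivity : 0 ≤ ℓ * √ℓ), ← mul_assoc] at h
  exact (le_abs_self _).trans h

lemma log_two_add_le_sq_div_two_mul {lam a ℓ E : ℝ} (hlam : 0 < lam) (hℓ : 1 ≤ ℓ)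
    (hgauss : E ≤ a ^ 2 / (2 + exp 2) * (ℓ * √ℓ)) :
    E ≤ (a * √lam * ℓ) ^ 2 / (2 * lam) := by
  have hsq : (a * √lam * ℓ) ^ 2 / (2 * lam) = a ^ 2 / 2 * (ℓ * ℓ) := by
    rw [mul_pow, mul_pow, sq_sqrt hlam.le]
    field_simp
  rw [hsq]
  refine hgauss.trans ?_
  gcongr
  · linarith [exp_pos 2]
  · exact sqrt_le_self_iff.2 (Or.inr hℓ)

lemma log_two_add_le_mul_bennett {lam₀ lam a ℓ : ℝ} (hlam₀ : 0 < lam₀) (hlam : lam₀ ≤ lam)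
    (ha : 0 < a) (hℓ : 1 ≤ ℓ)
    (hgauss : log 2 + a * √lam₀ / 2 * ℓ * log ℓ ≤ a ^ 2 / (2 + exp 2) * (ℓ * √ℓ))
    (hlin : log 2 ≤ a * √lam₀ * ℓ) :
    log 2 + a * √lam₀ / 2 * ℓ * log ℓ ≤ lam * bennett (a * √lam * ℓ / lam) := by
  have hlam0 : 0 < lam := hlam₀.trans_le hlam
  have hr : 0 < √lam := sqrt_pos.2 hlam0
  have hrr : √lam₀ ≤ √lam := sqrt_le_sqrt hlam
  have hsℓ : 1 ≤ √ℓ := one_le_sqrt.2 hℓ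
  set q := a * √lam * ℓ / lam with hq_def
  have hq : 0 < q := by positivity
  have hq_eq : q = a * ℓ / √lam := by
    rw [div_eq_div_iff hlam0.ne' hr.ne', mul_assoc a, mul_assoc a, mul_comm √lam, mul_assoc,
      mul_self_sqrt hlam0.le]
    ring
  have hlamq : lam * q = a * √lam * ℓ := by
    rw [hq_def]
    field_simp
  -- `e²` is chosen so that `log (1 + q) - 1 ≥ 1 + log ℓ / 2` beyond the split point.
  rcases le_total q (exp 2 * √ℓ) with hsmall | hlarge
  · have hlamq2 : lam * q ^ 2 = a ^ 2 * ℓ ^ 2 := by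
      rw [hq_eq, div_pow, sq_sqrt hlam0.le]
      field_simp
    have hden : 2 + q ≤ (2 + exp 2) * √ℓ := by nlinarith [exp_pos 2]
    calc log 2 + a * √lam₀ / 2 * ℓ * log ℓ ≤ a ^ 2 / (2 + exp 2) * (ℓ * √ℓ) := hgauss
      _ = a ^ 2 * ℓ ^ 2 / ((2 + exp 2) * √ℓ) := by
        field_simp
        rw [sq_sqrt (by linarith)]
      _ ≤ a ^ 2 * ℓ ^ 2 / (2 + q) := by gcongr
      _ = lam * (q ^ 2 / (2 + q)) := by rw [← hlamq2, mul_div_assoc]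
      _ ≤ lam * bennett q := mul_le_mul_of_nonneg_left (sq_div_two_add_le_bennett hq.le) hlam0.le
  · have hlog : 2 + log ℓ / 2 ≤ log (1 + q) := by
      have h : log (exp 2 * √ℓ) = 2 + log ℓ / 2 := by
        rw [log_mul (exp_pos 2).ne' (by positivity), log_exp, log_sqrt (by linarith)]
      rw [← h]
      exact log_le_log (by positivity) (by linarith)
    have hlogℓ : 0 ≤ log ℓ := log_nonneg hℓ
    calc log 2 + a * √lam₀ / 2 * ℓ * log ℓ ≤ a * √lam₀ * ℓ * (1 + log ℓ / 2) := by nlinarith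
      _ ≤ a * √lam * ℓ * (1 + log ℓ / 2) := by gcongr
      _ ≤ lam * q * (log (1 + q) - 1) := by rw [hlamq]; gcongr; linarith
      _ ≤ lam * bennett q := by
        rw [mul_assoc]
        exact mul_le_mul_of_nonneg_left (mul_log_one_add_sub_one_le_bennett hq.le) hlam0.le

/-- Large deviation bound: for `λ ≥ λ₀` and all sufficiently large `L`,
`P(|K - λ| > a √λ ln L) ≤ L^(-d ln ln L)` with `d = a √λ₀ / 2`. -/
theorem poisson_logL_deviation (lam₀ a : ℝ) (hlam₀ : 0 < lam₀) (ha : 0 < a) :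
    ∃ L₀ : ℝ, ∀ L : ℝ, L₀ ≤ L →
      ∀ {Ω : Type} [MeasurableSpace Ω] (μ : Measure Ω), IsProbabilityMeasure μ →
      ∀ (K : Ω → ℕ) (lam : ℝ), lam₀ ≤ lam →
      (∀ n : ℕ, μ {ω | K ω = n}
        = ENNReal.ofReal (Real.exp (-lam) * lam ^ n / n.factorial)) →
      μ {ω | a * Real.sqrt lam * Real.log L < |(K ω : ℝ) - lam|}
        ≤ ENNReal.ofReal (L ^ (-(a * Real.sqrt lam₀ / 2) * Real.log (Real.log L))) := by
  have hℓ : ∀ᶠ ℓ in atTop, (log 2 + a * √lam₀ / 2 * ℓ * log ℓ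
      ≤ a ^ 2 / (2 + exp 2) * (ℓ * √ℓ) ∧ log 2 ≤ a * √lam₀ * ℓ) ∧ 1 ≤ ℓ :=
    ((eventually_log_two_add_mul_log_le _ (by positivity)).and
      ((tendsto_id.const_mul_atTop (by positivity)).eventually_ge_atTop _)).and
      (eventually_ge_atTop 1)
  obtain ⟨L₀, hL₀⟩ := eventually_atTop.1 (tendsto_log_atTop.eventually hℓ)
  refine ⟨max L₀ 1, fun L hL Ω _ μ _ K lam hlam hK => ?_⟩
  obtain ⟨⟨hgauss, hlin⟩, hℓ1⟩ := hL₀ L (le_of_max_le_left hL)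
  have hL : 0 < L := zero_lt_one.trans_le (le_of_max_le_right hL)
  have hlam0 : 0 < lam := hlam₀.trans_le hlam
  set ℓ := log L with hℓ_def
  calc μ {ω | a * √lam * ℓ < |(K ω : ℝ) - lam|}
      ≤ ENNReal.ofReal (exp (-(lam * bennett (a * √lam * ℓ / lam))))
        + ENNReal.ofReal (exp (-((a * √lam * ℓ) ^ 2 / (2 * lam)))) :=
        measure_lt_abs_sub_le hlam0 hK (by positivity)
    _ ≤ ENNReal.ofReal (exp (-(log 2 + a * √lam₀ / 2 * ℓ * log ℓ)))
        + ENNReal.ofReal (exp (-(log 2 + a * √lam₀ / 2 * ℓ * log ℓ))) := by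
        gcongr
        · exact log_two_add_le_mul_bennett hlam₀ hlam ha hℓ1 hgauss hlin
        · exact log_two_add_le_sq_div_two_mul hlam0 hℓ1 hgauss
    _ = ENNReal.ofReal (L ^ (-(a * √lam₀ / 2) * log ℓ)) := by
        rw [← ENNReal.ofReal_add (by positivity) (by positivity), rpow_def_of_pos hL, ← hℓ_def,
          neg_add, exp_add, exp_neg (log 2), exp_log two_pos]
        ring_nf
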